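/- Let A ∈ ℝ^{N×d} and C be a symmetric positive-definite d×d matrix. Then the squared spectral norm satisfies ‖C^{-1/2}(AᵀA + C⁻¹)⁻¹ Aᵀ‖₂² ≤ 1/4. -/

import Mathlib

/-!
Write `D = C^{1/2}` and `G = A D`. Since `D (AᵀA + C⁻¹) D = GᵀG + 1`, the matrix in question is
`(GᵀG + 1)⁻¹ Gᵀ`. If `x = (GᵀG + 1)⁻¹ Gᵀ y`, pairing `GᵀG x + x = Gᵀ y` with `x` gives
`‖Gx‖² + ‖x‖² = ⟪Gx, y⟫ ≤ ‖Gx‖ ‖y‖`, and `‖Gx‖ ‖y‖ - ‖Gx‖² ≤ ‖y‖² / 4` bounds `‖x‖` by `‖y‖ / 2`.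
-/

open Matrix

/-- The spectral norm (operator 2-norm) of a real matrix. -/
noncomputable def spec {n m : ℕ} (A : Matrix (Fin n) (Fin m) ℝ) : ℝ :=
  ‖LinearMap.toContinuousLinearMap (Matrix.toEuclideanLin A)‖

/-- The square root of a positive semidefinite matrix, as `Matrix.PosSemidef.sqrt` was defined
in the older Mathlib (that declaration no longer exists). -/
noncomputable def posSemidefSqrt {n : ℕ} {M : Matrix (Fin n) (Fin n) ℝ} (hM : M.PosSemidef) :
    Matrix (Fin n) (Fin n) ℝ :=
  (hM.1.eigenvectorUnitary : Matrix (Fin n) (Fin n) ℝ) * diagonal (fun i => √(hM.1.eigenvalues i)) *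
    (star hM.1.eigenvectorUnitary : Matrix (Fin n) (Fin n) ℝ)

section PosSemidefSqrt

variable {n : ℕ} {M : Matrix (Fin n) (Fin n) ℝ} (hM : M.PosSemidef)

theorem posSemidefSqrt_eq_cfc : posSemidefSqrt hM = cfc Real.sqrt M := by
  rw [hM.1.cfc_eq, IsHermitian.cfc, Unitary.conjStarAlgAut_apply]
  rfl

theorem posSemidefSqrt_mul_self : posSemidefSqrt hM * posSemidefSqrt hM = M := by
  rw [posSemidefSqrt_eq_cfc, ← cfc_mul Real.sqrt Real.sqrt M]
  conv_rhs => rw [← cfc_id' ℝ M hM.1]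
  refine cfc_congr fun x hx => Real.mul_self_sqrt ?_
  rw [hM.1.spectrum_real_eq_range_eigenvalues] at hx
  obtain ⟨i, rfl⟩ := hx
  exact hM.eigenvalues_nonneg i

theorem transpose_posSemidefSqrt : (posSemidefSqrt hM)ᵀ = posSemidefSqrt hM := by
  rw [posSemidefSqrt_eq_cfc]
  exact (cfc_predicate Real.sqrt M).isHermitian

end PosSemidefSqrt

theorem LinearMap.norm_le_half_of_adjoint_apply_add_eq {E F : Type*}
    [NormedAddCommGroup E] [InnerProductSpace ℝ E] [FiniteDimensional ℝ E]
    [NormedAddCommGroup F] [InnerProductSpace ℝ F] [FiniteDimensional ℝ F]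
    (T : E →ₗ[ℝ] F) {x : E} {y : F} (h : T.adjoint (T x) + x = T.adjoint y) :
    ‖x‖ ≤ ‖y‖ / 2 := by
  have hpair : ‖T x‖ ^ 2 + ‖x‖ ^ 2 = inner ℝ (T x) y := by
    have := congrArg (inner ℝ x) h
    rwa [inner_add_right, adjoint_inner_right, adjoint_inner_right,
      real_inner_self_eq_norm_sq, real_inner_self_eq_norm_sq] at this
  have hcs := real_inner_le_norm (T x) y
  nlinarith [sq_nonneg (‖T x‖ - ‖y‖ / 2), norm_nonneg x, norm_nonneg y]

theorem Matrix.isUnit_det_transpose_mul_self_add_one {m n : Type*} [Fintype m] [Fintype n]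
    [DecidableEq n] (G : Matrix m n ℝ) : IsUnit (Gᵀ * G + 1).det := by
  have hGG : (Gᵀ * G).PosSemidef := by
    simpa only [conjTranspose_eq_transpose_of_trivial] using posSemidef_conjTranspose_mul_self G
  exact (isUnit_iff_isUnit_det _).mp (PosDef.posSemidef_add hGG PosDef.one).isUnit

theorem spec_inv_transpose_mul_self_add_one_mul_transpose_le {N d : ℕ}
    (G : Matrix (Fin N) (Fin d) ℝ) : spec ((Gᵀ * G + 1)⁻¹ * Gᵀ) ≤ 1 / 2 := by
  refine ContinuousLinearMap.opNorm_le_bound _ (by norm_num) fun y => ?_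
  suffices h : ‖toEuclideanLin ((Gᵀ * G + 1)⁻¹ * Gᵀ) y‖ ≤ ‖y‖ / 2 by
    simpa [div_eq_inv_mul] using h
  refine (toEuclideanLin G).norm_le_half_of_adjoint_apply_add_eq ?_
  rw [← toEuclideanLin_conjTranspose_eq_adjoint, conjTranspose_eq_transpose_of_trivial]
  have := congrArg (fun M => toEuclideanLin M y)
    (mul_nonsing_inv_cancel_left (A := Gᵀ * G + 1) Gᵀ (isUnit_det_transpose_mul_self_add_one G))
  simpa [add_mul] using this

theorem Matrix.inv_mul_inv_transpose_mul_self_add_inv_mul_transpose {m n K : Type*}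
    [Fintype m] [Fintype n] [DecidableEq n] [Field K] (A : Matrix m n K) {C D : Matrix n n K}
    (hD : IsUnit D.det) (hDT : Dᵀ = D) (hDD : D * D = C) :
    D⁻¹ * (Aᵀ * A + C⁻¹)⁻¹ * Aᵀ = ((A * D)ᵀ * (A * D) + 1)⁻¹ * (A * D)ᵀ := by
  have hconj : (A * D)ᵀ * (A * D) + 1 = D * (Aᵀ * A + C⁻¹) * D := by
    rw [← hDD, Matrix.mul_inv_rev, transpose_mul, hDT, Matrix.mul_add, Matrix.add_mul,
      mul_nonsing_inv_cancel_left (A := D) _ hD, nonsing_inv_mul _ hD]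
    simp only [Matrix.mul_assoc]
  rw [hconj, Matrix.mul_inv_rev, Matrix.mul_inv_rev, transpose_mul, hDT]
  simp only [Matrix.mul_assoc, nonsing_inv_mul_cancel_left _ _ hD]

theorem stmt_7 {N d : ℕ} (A : Matrix (Fin N) (Fin d) ℝ)
    (C : Matrix (Fin d) (Fin d) ℝ) (hC : C.PosDef) :
    spec ((posSemidefSqrt hC.posSemidef)⁻¹ * (Aᵀ * A + C⁻¹)⁻¹ * Aᵀ) ^ 2 ≤ 1 / 4 := by
  set D := posSemidefSqrt hC.posSemidef
  have hDD : D * D = C := posSemidefSqrt_mul_self _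
  have hD : IsUnit D.det := by
    have hC' : IsUnit (D * D).det := hDD ▸ (isUnit_iff_isUnit_det C).mp hC.isUnit
    exact isUnit_of_mul_isUnit_left (det_mul D D ▸ hC')
  rw [inv_mul_inv_transpose_mul_self_add_inv_mul_transpose A hD (transpose_posSemidefSqrt _) hDD]
  calc spec (((A * D)ᵀ * (A * D) + 1)⁻¹ * (A * D)ᵀ) ^ 2 ≤ (1 / 2) ^ 2 :=
        pow_le_pow_left₀ (norm_nonneg _) (spec_inv_transpose_mul_self_add_one_mul_transpose_le _) 2
    _ = 1 / 4 := by norm_num
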